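/- arXiv:2207.14565 — 5 statements merged into one kernel-verified Lean document; each statement's English description precedes it below -/
import Mathlib

section
/- Let f : ℝ → ℝ be bounded, and Lipschitz-continuous on each interval between consecutive points of a finite set S ⊂ ℝ. Let φ : ℝ → ℝ be a C¹ nonincreasing function with φ(z) → θ_j as z → -∞ and φ(z) → θ_i as z → +∞, where θ_i < θ_j, satisfying φ'' + c φ' + f(φ) = 0 classically on {z : φ(z) ∉ S}. If the left limit of f at θ_j is strictly positive and the right limit of f at θ_i is strictly negative, then the closure of the support of φ' is compact; i.e., there exist a < b with φ(z) = θ_j for all z ≤ a and φ(z) = θ_i for all z ≥ b. -/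
open Filter Set

/-- The derivative of an antitone differentiable function is nonpositive. -/
lemma deriv_nonpos_of_antitone {φ : ℝ → ℝ} (hC1 : ContDiff ℝ 1 φ) (hmono : Antitone φ)
    (z : ℝ) : deriv φ z ≤ 0 := by
  have hd : HasDerivAt φ (deriv φ z) z := (hC1.differentiable one_ne_zero z).hasDerivAt
  have h : Tendsto (slope φ z) (nhdsWithin z (Ioi z)) (nhds (deriv φ z)) :=
    (hasDerivAt_iff_tendsto_slope.1 hd).mono_left
      (nhdsWithin_mono z fun y hy => ne_of_gt hy)
  refine le_of_tendsto h (eventually_nhdsWithin_of_forall fun y hy => ?_)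
  rw [slope_def_field]
  apply div_nonpos_of_nonpos_of_nonneg
  · exact sub_nonpos.2 (hmono hy.le)
  · exact sub_nonneg.2 hy.le

/-- Near any point, a punctured neighborhood avoids a finite set. -/
lemma punctured_avoid (S : Set ℝ) (hS : S.Finite) (p : ℝ) :
    ∃ δ > (0:ℝ), ∀ u, u ≠ p → |u - p| < δ → u ∉ S := by
  have hT : (S \ {p}).Finite := hS.diff
  have hcl : IsClosed (S \ {p}) := hT.isClosed
  have hp : p ∈ (S \ {p})ᶜ := by simp
  obtain ⟨δ, hδ, hball⟩ := Metric.isOpen_iff.1 hcl.isOpen_compl p hp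
  refine ⟨δ, hδ, fun u hne hd hus => ?_⟩
  have h1 : u ∈ S \ {p} := ⟨hus, hne⟩
  have h2 : u ∈ Metric.ball p δ := by rwa [Metric.mem_ball, Real.dist_eq]
  exact hball h2 h1

/-- `f` is continuous on any interval avoiding `S`. -/
lemma cont_of_lip {f : ℝ → ℝ} {S : Set ℝ} {K : ℝ} (hK0 : 0 ≤ K)
    (hKl : ∀ x y : ℝ, (Set.uIcc x y ∩ S = ∅) → |f x - f y| ≤ K * |x - y|)
    {U : Set ℝ} (hUord : U.OrdConnected) (hUS : ∀ u ∈ U, u ∉ S) :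
    ContinuousOn f U := by
  have hL : LipschitzOnWith K.toNNReal f U := by
    rw [lipschitzOnWith_iff_dist_le_mul]
    intro x hx y hy
    rw [Real.dist_eq, Real.dist_eq]
    have hsub : uIcc x y ∩ S = ∅ := by
      rw [Set.eq_empty_iff_forall_notMem]
      intro u ⟨hu1, hu2⟩
      exact hUS u (hUord.uIcc_subset hx hy hu1) hu2
    calc |f x - f y| ≤ K * |x - y| := hKl x y hsub
      _ = (K.toNNReal : ℝ) * |x - y| := by rw [Real.coe_toNNReal K hK0]
  exact hL.continuousOn

/-- Fundamental theorem of calculus applied to the wave equation on an interval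
where `φ` avoids `S`. -/
lemma ftc_wave {f : ℝ → ℝ} {S : Set ℝ} {φ : ℝ → ℝ} {c : ℝ}
    (hC1 : ContDiff ℝ 1 φ)
    (hode : ∀ z : ℝ, φ z ∉ S →
      HasDerivAt (deriv φ) (-(c * deriv φ z) - f (φ z)) z)
    {u v : ℝ} (huv : u ≤ v)
    (hnotS : ∀ s ∈ Icc u v, φ s ∉ S)
    (hFint : IntervalIntegrable (fun s => f (φ s)) MeasureTheory.volume u v) :
    deriv φ v - deriv φ u = -(c * (φ v - φ u)) - ∫ s in u..v, f (φ s) := by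
  have hdc : Continuous (deriv φ) := hC1.continuous_deriv le_rfl
  have hInt2 : IntervalIntegrable (fun s => -(c * deriv φ s)) MeasureTheory.volume u v :=
    ((continuous_const.mul hdc).neg).intervalIntegrable u v
  have hFTC : ∫ s in u..v, (-(c * deriv φ s) - f (φ s)) = deriv φ v - deriv φ u := by
    refine intervalIntegral.integral_eq_sub_of_hasDerivAt (fun s hs => ?_) (hInt2.sub hFint)
    exact hode s (hnotS s (by rwa [uIcc_of_le huv] at hs))
  have hsplit : ∫ s in u..v, (-(c * deriv φ s) - f (φ s))
      = (∫ s in u..v, -(c * deriv φ s)) - ∫ s in u..v, f (φ s) :=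
    intervalIntegral.integral_sub hInt2 hFint
  have hderiv_int : ∫ s in u..v, deriv φ s = φ v - φ u :=
    intervalIntegral.integral_deriv_eq_sub (fun x _ => hC1.differentiable one_ne_zero x)
      (hdc.intervalIntegrable u v)
  have h1 : ∫ s in u..v, -(c * deriv φ s) = -(c * (φ v - φ u)) := by
    rw [intervalIntegral.integral_neg, intervalIntegral.integral_const_mul, hderiv_int]
  rw [← hFTC, hsplit, h1]

/-- If `φ` never reaches `θi`, the wave equation forces a contradiction on the right. -/
lemma hits_right
    (f : ℝ → ℝ) (S : Set ℝ) (hS : S.Finite)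
    (hlip : ∃ K ≥ (0:ℝ), ∀ x y : ℝ, (Set.uIcc x y ∩ S = ∅) → |f x - f y| ≤ K * |x - y|)
    (θi θj : ℝ) (hij : θi < θj)
    (φ : ℝ → ℝ) (c : ℝ)
    (hC1 : ContDiff ℝ 1 φ) (hmono : Antitone φ)
    (hlb : ∀ z, θi ≤ φ z) (hub : ∀ z, φ z ≤ θj)
    (hlimpos : Tendsto φ atTop (nhds θi))
    (hode : ∀ z : ℝ, φ z ∉ S →
      HasDerivAt (deriv φ) (-(c * deriv φ z) - f (φ z)) z)
    (hjumpi : ∃ r < (0:ℝ), Tendsto f (nhdsWithin θi (Set.Ioi θi)) (nhds r)) :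
    ∃ b, φ b = θi := by
  by_contra hcon
  push_neg at hcon
  have hgt : ∀ z, θi < φ z := fun z => lt_of_le_of_ne (hlb z) (Ne.symm (hcon z))
  obtain ⟨r, hr, htend⟩ := hjumpi
  obtain ⟨K, hK0, hKl⟩ := hlip
  -- small right interval where f < r/2
  have h1 : {u | f u < r / 2} ∈ nhdsWithin θi (Ioi θi) :=
    htend.eventually (eventually_lt_nhds (by linarith))
  obtain ⟨u', hu', hsub1⟩ := mem_nhdsGT_iff_exists_Ioo_subset.1 h1
  obtain ⟨δ2, hδ2, havoid⟩ := punctured_avoid S hS θi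
  set δ : ℝ := min (u' - θi) δ2 with hδdef
  have hδ : 0 < δ := lt_min (by linarith [mem_Ioi.1 hu']) hδ2
  set U : Set ℝ := Ioo θi (θi + δ) with hUdef
  have hUf : ∀ u ∈ U, f u < r / 2 := by
    intro u hu
    exact hsub1 ⟨hu.1, lt_of_lt_of_le hu.2 (by linarith [min_le_left (u' - θi) δ2])⟩
  have hUS : ∀ u ∈ U, u ∉ S := by
    intro u hu
    refine havoid u (ne_of_gt hu.1) ?_
    rw [abs_lt]
    constructor
    · linarith [hu.1]
    · linarith [hu.2, min_le_right (u' - θi) δ2]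
  -- point beyond which φ stays in U
  have h2 : ∀ᶠ z in atTop, φ z < θi + δ :=
    hlimpos.eventually (eventually_lt_nhds (by linarith))
  obtain ⟨z0, hz0⟩ := h2.exists_forall_of_atTop
  have hU : ∀ z, z0 ≤ z → φ z ∈ U := fun z hz =>
    ⟨hgt z, lt_of_le_of_lt (hmono hz) (hz0 z0 le_rfl)⟩
  -- the contradiction point
  set A : ℝ := |deriv φ z0| + |c| * (θj - θi) with hAdef
  have hA0 : 0 ≤ A := add_nonneg (abs_nonneg _) (mul_nonneg (abs_nonneg _) (by linarith))
  set T : ℝ := (A + 1) * (2 / (-r)) with hTdef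
  have hT0 : 0 < T := by
    apply mul_pos (by linarith)
    apply div_pos two_pos (by linarith)
  set z : ℝ := z0 + T with hzdef
  have hz : z0 ≤ z := by simp [hzdef]; linarith
  have hUmem : ∀ s ∈ Icc z0 z, φ s ∈ U := fun s hs => hU s hs.1
  have hnotS : ∀ s ∈ Icc z0 z, φ s ∉ S := fun s hs => hUS _ (hUmem s hs)
  -- integrability of f ∘ φ
  have hfc : ContinuousOn f U := cont_of_lip hK0 hKl Set.ordConnected_Ioo hUS
  have hFc : ContinuousOn (fun s => f (φ s)) (Icc z0 z) :=
    hfc.comp hC1.continuous.continuousOn hUmem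
  have hFint : IntervalIntegrable (fun s => f (φ s)) MeasureTheory.volume z0 z := by
    apply ContinuousOn.intervalIntegrable
    rwa [uIcc_of_le hz]
  have hftc := ftc_wave hC1 hode hz hnotS hFint
  -- bound the integral
  have hIle : (∫ s in z0..z, f (φ s)) ≤ (z - z0) * (r / 2) := by
    have := intervalIntegral.integral_mono_on hz hFint
      (intervalIntegrable_const (c := r / 2)) (fun s hs => (hUf _ (hUmem s hs)).le)
    rwa [intervalIntegral.integral_const, smul_eq_mul] at this
  -- bound -c(φ z - φ z0)
  have hcb : -(c * (φ z - φ z0)) ≥ -(|c| * (θj - θi)) := by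
    have h3 : |φ z - φ z0| ≤ θj - θi := by
      rw [abs_le]; constructor <;> [linarith [hlb z, hub z0]; linarith [hub z, hlb z0]]
    have h4 : |c * (φ z - φ z0)| ≤ |c| * (θj - θi) := by
      rw [abs_mul]
      exact mul_le_mul_of_nonneg_left h3 (abs_nonneg c)
    linarith [neg_abs_le (c * (φ z - φ z0)), le_abs_self (c * (φ z - φ z0))]
  have hzT : z - z0 = T := by simp [hzdef]
  have hTr : (z - z0) * (r / 2) = -(A + 1) := by
    have hkey : (2 / (-r)) * (r / 2) = -1 := by
      rw [div_mul_div_comm, div_eq_iff (by nlinarith : (-r) * 2 ≠ 0)]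
      ring
    rw [hzT, hTdef, mul_assoc, hkey]
    ring
  -- conclude
  have hderiv_pos : deriv φ z ≥ 1 := by
    have h5 : deriv φ z = deriv φ z0 + (-(c * (φ z - φ z0)) - ∫ s in z0..z, f (φ s)) := by
      linarith [hftc]
    have h6 : deriv φ z ≥ deriv φ z0 - |c| * (θj - θi) + (A + 1) := by
      rw [h5]; rw [hTr] at hIle; linarith
    have h7 : deriv φ z0 ≥ -|deriv φ z0| := neg_abs_le _
    rw [hAdef] at h6
    linarith
  linarith [deriv_nonpos_of_antitone hC1 hmono z]

/-- If `φ` never reaches `θj`, the wave equation forces a contradiction on the left. -/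
lemma hits_left
    (f : ℝ → ℝ) (S : Set ℝ) (hS : S.Finite)
    (hlip : ∃ K ≥ (0:ℝ), ∀ x y : ℝ, (Set.uIcc x y ∩ S = ∅) → |f x - f y| ≤ K * |x - y|)
    (θi θj : ℝ) (hij : θi < θj)
    (φ : ℝ → ℝ) (c : ℝ)
    (hC1 : ContDiff ℝ 1 φ) (hmono : Antitone φ)
    (hlb : ∀ z, θi ≤ φ z) (hub : ∀ z, φ z ≤ θj)
    (hlimneg : Tendsto φ atBot (nhds θj))
    (hode : ∀ z : ℝ, φ z ∉ S →
      HasDerivAt (deriv φ) (-(c * deriv φ z) - f (φ z)) z)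
    (hjumpj : ∃ l > (0:ℝ), Tendsto f (nhdsWithin θj (Set.Iio θj)) (nhds l)) :
    ∃ a, φ a = θj := by
  by_contra hcon
  push_neg at hcon
  have hlt : ∀ z, φ z < θj := fun z => lt_of_le_of_ne (hub z) (hcon z)
  obtain ⟨l, hl, htend⟩ := hjumpj
  obtain ⟨K, hK0, hKl⟩ := hlip
  -- small left interval where f > l/2
  have h1 : {u | l / 2 < f u} ∈ nhdsWithin θj (Iio θj) :=
    htend.eventually (eventually_gt_nhds (by linarith))
  obtain ⟨l', hl', hsub1⟩ := mem_nhdsLT_iff_exists_Ioo_subset.1 h1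
  obtain ⟨δ2, hδ2, havoid⟩ := punctured_avoid S hS θj
  set δ : ℝ := min (θj - l') δ2 with hδdef
  have hδ : 0 < δ := lt_min (by linarith [mem_Iio.1 hl']) hδ2
  set U : Set ℝ := Ioo (θj - δ) θj with hUdef
  have hUf : ∀ u ∈ U, l / 2 < f u := by
    intro u hu
    refine hsub1 ⟨?_, hu.2⟩
    have := min_le_left (θj - l') δ2
    linarith [hu.1]
  have hUS : ∀ u ∈ U, u ∉ S := by
    intro u hu
    refine havoid u (ne_of_lt hu.2) ?_
    rw [abs_lt]
    constructor
    · linarith [hu.1, min_le_right (θj - l') δ2]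
    · linarith [hu.2, hδ2]
  -- point before which φ stays in U
  have h2 : ∀ᶠ z in atBot, θj - δ < φ z :=
    hlimneg.eventually (eventually_gt_nhds (by linarith))
  obtain ⟨z1, hz1⟩ := h2.exists_forall_of_atBot
  have hU : ∀ z, z ≤ z1 → φ z ∈ U := fun z hz =>
    ⟨lt_of_lt_of_le (hz1 z1 le_rfl) (hmono hz), hlt z⟩
  -- the contradiction point
  set A : ℝ := |deriv φ z1| + |c| * (θj - θi) with hAdef
  have hA0 : 0 ≤ A := add_nonneg (abs_nonneg _) (mul_nonneg (abs_nonneg _) (by linarith))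
  set T : ℝ := (A + 1) * (2 / l) with hTdef
  have hT0 : 0 < T := by
    apply mul_pos (by linarith)
    apply div_pos two_pos hl
  set z : ℝ := z1 - T with hzdef
  have hz : z ≤ z1 := by simp [hzdef]; linarith
  have hUmem : ∀ s ∈ Icc z z1, φ s ∈ U := fun s hs => hU s hs.2
  have hnotS : ∀ s ∈ Icc z z1, φ s ∉ S := fun s hs => hUS _ (hUmem s hs)
  -- integrability of f ∘ φ
  have hfc : ContinuousOn f U := cont_of_lip hK0 hKl Set.ordConnected_Ioo hUS
  have hFc : ContinuousOn (fun s => f (φ s)) (Icc z z1) :=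
    hfc.comp hC1.continuous.continuousOn hUmem
  have hFint : IntervalIntegrable (fun s => f (φ s)) MeasureTheory.volume z z1 := by
    apply ContinuousOn.intervalIntegrable
    rwa [uIcc_of_le hz]
  have hftc := ftc_wave hC1 hode hz hnotS hFint
  -- bound the integral
  have hIge : (z1 - z) * (l / 2) ≤ ∫ s in z..z1, f (φ s) := by
    have := intervalIntegral.integral_mono_on hz
      (intervalIntegrable_const (c := l / 2)) hFint (fun s hs => (hUf _ (hUmem s hs)).le)
    rwa [intervalIntegral.integral_const, smul_eq_mul] at this
  -- bound c(φ z1 - φ z)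
  have hcb : c * (φ z1 - φ z) ≥ -(|c| * (θj - θi)) := by
    have h3 : |φ z1 - φ z| ≤ θj - θi := by
      rw [abs_le]; constructor <;> [linarith [hlb z1, hub z]; linarith [hub z1, hlb z]]
    have h4 : |c * (φ z1 - φ z)| ≤ |c| * (θj - θi) := by
      rw [abs_mul]
      exact mul_le_mul_of_nonneg_left h3 (abs_nonneg c)
    linarith [neg_abs_le (c * (φ z1 - φ z))]
  have hzT : z1 - z = T := by simp [hzdef]
  have hTl : (z1 - z) * (l / 2) = A + 1 := by
    have hkey : (2 / l) * (l / 2) = 1 := by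
      rw [div_mul_div_comm, div_eq_iff (by nlinarith : l * 2 ≠ 0)]
      ring
    rw [hzT, hTdef, mul_assoc, hkey]
    ring
  -- conclude
  have hderiv_pos : deriv φ z ≥ 1 := by
    have h5 : deriv φ z = deriv φ z1 + c * (φ z1 - φ z) + ∫ s in z..z1, f (φ s) := by
      linarith [hftc]
    have h6 : deriv φ z ≥ deriv φ z1 - |c| * (θj - θi) + (A + 1) := by
      rw [h5]; rw [hTl] at hIge; linarith
    have h7 : deriv φ z1 ≥ -|deriv φ z1| := neg_abs_le _
    rw [hAdef] at h6
    linarith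
  linarith [deriv_nonpos_of_antitone hC1 hmono z]

/-- A nonincreasing C¹ traveling wave of `u_t = u_xx + f(u)` connecting two
stable states `θi < θj` at which `f` has sign jumps (positive left limit at `θj`, negative
right limit at `θi`) must be *compact*: it coincides with `θj` on a left half-line and with
`θi` on a right half-line. -/
theorem compact_wave
    (f : ℝ → ℝ) (S : Set ℝ) (hS : S.Finite)
    -- f bounded
    (hbdd : ∃ M : ℝ, ∀ u, |f u| ≤ M)
    -- f Lipschitz on each interval between consecutive points of S
    (hlip : ∃ K ≥ (0:ℝ), ∀ x y : ℝ, (Set.uIcc x y ∩ S = ∅) → |f x - f y| ≤ K * |x - y|)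
    (θi θj : ℝ) (hij : θi < θj)
    (φ : ℝ → ℝ) (c : ℝ)
    (hC1 : ContDiff ℝ 1 φ)
    (hmono : Antitone φ)
    (hlimneg : Tendsto φ atBot (nhds θj))
    (hlimpos : Tendsto φ atTop (nhds θi))
    -- the traveling wave equation, classically on {z : φ z ∉ S}
    (hode : ∀ z : ℝ, φ z ∉ S →
      HasDerivAt (deriv φ) (-(c * deriv φ z) - f (φ z)) z)
    -- the left limit of f at θj is positive, the right limit of f at θi is negative
    (hjumpj : ∃ l > (0:ℝ), Tendsto f (nhdsWithin θj (Set.Iio θj)) (nhds l))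
    (hjumpi : ∃ r < (0:ℝ), Tendsto f (nhdsWithin θi (Set.Ioi θi)) (nhds r)) :
    ∃ a b : ℝ, a < b ∧ (∀ z ≤ a, φ z = θj) ∧ (∀ z ≥ b, φ z = θi) := by
  -- global bounds
  have hlb : ∀ z, θi ≤ φ z := by
    intro z
    refine le_of_tendsto hlimpos ?_
    filter_upwards [eventually_ge_atTop z] with w hw
    exact hmono hw
  have hub : ∀ z, φ z ≤ θj := by
    intro z
    refine ge_of_tendsto hlimneg ?_
    filter_upwards [eventually_le_atBot z] with w hw
    exact hmono hw
  obtain ⟨b0, hb0⟩ := hits_right f S hS hlip θi θj hij φ c hC1 hmono hlb hub hlimpos hode hjumpi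
  obtain ⟨a0, ha0⟩ := hits_left f S hS hlip θi θj hij φ c hC1 hmono hlb hub hlimneg hode hjumpj
  have hab : a0 < b0 := by
    by_contra h
    push_neg at h
    have := hmono h
    rw [ha0, hb0] at this
    linarith
  refine ⟨a0, b0, hab, fun z hz => ?_, fun z hz => ?_⟩
  · have h1 : φ z ≥ φ a0 := hmono hz
    rw [ha0] at h1
    linarith [hub z]
  · have h1 : φ z ≤ φ b0 := hmono hz
    rw [hb0] at h1
    linarith [hlb z]
end

section
/- Let f : ℝ → ℝ satisfy f(θ₁) = 0 and f(s) ≥ -M(θ₁ - s) for all s ∈ (0, θ₁], with M > 0. Then for any A > 0, the function u(t,x) := max{0, θ₁ - A·exp(√M·(x + 2√M·t))} satisfies ∂ₜu - ∂ₓₓu - f(u) ≤ 0 at every point where u > 0; i.e., it is a subsolution of ∂ₜu = ∂ₓₓu + f(u) wherever positive. -/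
open Real Set

/-- the exponential profile `u(t,x) = max {0, θ₁ - A e^{√M (x + 2√M t)}}`
is a subsolution of `u_t = u_xx + f(u)` wherever it is positive, provided
`f(θ₁) = 0` and `f(s) ≥ -M (θ₁ - s)` on `(0, θ₁]`. -/
theorem exponential_subsolution
    (f : ℝ → ℝ) (θ₁ M A : ℝ) (hθ : 0 < θ₁) (hM : 0 < M) (hA : 0 < A)
    (hf0 : f θ₁ = 0)
    (hfM : ∀ s ∈ Set.Ioc (0:ℝ) θ₁, f s ≥ -M * (θ₁ - s)) :
    ∀ t x : ℝ,
      (fun t x => max 0 (θ₁ - A * Real.exp (Real.sqrt M * (x + 2 * Real.sqrt M * t)))) t x > 0 →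
      deriv (fun s => max 0 (θ₁ - A * Real.exp (Real.sqrt M * (x + 2 * Real.sqrt M * s)))) t
        - deriv (deriv (fun y => max 0 (θ₁ - A * Real.exp (Real.sqrt M * (y + 2 * Real.sqrt M * t))))) x
        - f (max 0 (θ₁ - A * Real.exp (Real.sqrt M * (x + 2 * Real.sqrt M * t)))) ≤ 0 := by
  intro t x hpos
  set c := Real.sqrt M with hc
  have hc2 : c * c = M := Real.mul_self_sqrt hM.le
  have hcpos : 0 < c := Real.sqrt_pos.mpr hM
  set E : ℝ := A * Real.exp (c * (x + 2 * c * t)) with hE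
  have hEpos : 0 < E := by positivity
  have hg : 0 < θ₁ - E := by
    simp only [gt_iff_lt, lt_max_iff, lt_irrefl, false_or] at hpos
    exact hpos
  -- time derivative
  have ht_smooth : HasDerivAt (fun s => θ₁ - A * Real.exp (c * (x + 2 * c * s)))
      (-(2 * M * E)) t := by
    have h1 : HasDerivAt (fun s : ℝ => x + 2 * c * s) (2 * c) t := by
      simpa using ((hasDerivAt_id t).const_mul (2 * c)).const_add x
    have h2 := ((h1.const_mul c).exp.const_mul A).const_sub θ₁
    convert h2 using 1
    · rfl
    · rfl
    rw [hE, ← hc2]; ring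
  have hcontT : Continuous (fun s : ℝ => θ₁ - A * Real.exp (c * (x + 2 * c * s))) := by
    continuity
  have hmemT : {s : ℝ | 0 < θ₁ - A * Real.exp (c * (x + 2 * c * s))} ∈ nhds t :=
    (isOpen_Ioi.preimage hcontT).mem_nhds hg
  have hevT : (fun s => max 0 (θ₁ - A * Real.exp (c * (x + 2 * c * s))))
      =ᶠ[nhds t] (fun s => θ₁ - A * Real.exp (c * (x + 2 * c * s))) :=
    Filter.eventually_of_mem hmemT fun s hs => max_eq_right (le_of_lt hs)
  have hDt : deriv (fun s => max 0 (θ₁ - A * Real.exp (c * (x + 2 * c * s)))) t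
      = -(2 * M * E) := by
    rw [hevT.deriv_eq]; exact ht_smooth.deriv
  -- space derivatives
  have hGsmooth : ∀ y : ℝ, HasDerivAt (fun y => θ₁ - A * Real.exp (c * (y + 2 * c * t)))
      (-(A * Real.exp (c * (y + 2 * c * t)) * c)) y := by
    intro y
    have h1 : HasDerivAt (fun y : ℝ => y + 2 * c * t) 1 y := (hasDerivAt_id y).add_const _
    have h2 := ((h1.const_mul c).exp.const_mul A).const_sub θ₁
    convert h2 using 1
    · rfl
    · rfl
    ring
  have hcontX : Continuous (fun y : ℝ => θ₁ - A * Real.exp (c * (y + 2 * c * t))) := by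
    continuity
  have hSopen : IsOpen {y : ℝ | 0 < θ₁ - A * Real.exp (c * (y + 2 * c * t))} :=
    isOpen_Ioi.preimage hcontX
  have hxS : x ∈ {y : ℝ | 0 < θ₁ - A * Real.exp (c * (y + 2 * c * t))} := hg
  have hevX : deriv (fun y => max 0 (θ₁ - A * Real.exp (c * (y + 2 * c * t))))
      =ᶠ[nhds x] (fun y => -(A * Real.exp (c * (y + 2 * c * t)) * c)) := by
    refine Filter.eventually_of_mem (hSopen.mem_nhds hxS) fun y hy => ?_
    have hev' : (fun z => max 0 (θ₁ - A * Real.exp (c * (z + 2 * c * t))))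
        =ᶠ[nhds y] (fun z => θ₁ - A * Real.exp (c * (z + 2 * c * t))) :=
      Filter.eventually_of_mem (hSopen.mem_nhds hy) fun z hz => max_eq_right (le_of_lt hz)
    rw [hev'.deriv_eq]
    exact (hGsmooth y).deriv
  have hpsi : HasDerivAt (fun y => -(A * Real.exp (c * (y + 2 * c * t)) * c)) (-(M * E)) x := by
    have h1 : HasDerivAt (fun y : ℝ => y + 2 * c * t) 1 x := (hasDerivAt_id x).add_const _
    have h2 := (((h1.const_mul c).exp.const_mul A).mul_const c).neg
    convert h2 using 1
    · rfl
    · rfl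
    · rfl
    rw [hE, ← hc2]; ring
  have hDxx : deriv (deriv (fun y => max 0 (θ₁ - A * Real.exp (c * (y + 2 * c * t))))) x
      = -(M * E) := by
    rw [hevX.deriv_eq]; exact hpsi.deriv
  -- reaction term
  have hu : max 0 (θ₁ - E) = θ₁ - E := max_eq_right hg.le
  have hmem : θ₁ - E ∈ Set.Ioc (0:ℝ) θ₁ := ⟨hg, by linarith⟩
  have hfu : f (θ₁ - E) ≥ -M * (θ₁ - (θ₁ - E)) := hfM _ hmem
  rw [hDt, hDxx, hu]
  have : -M * (θ₁ - (θ₁ - E)) = -(M * E) := by ring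
  rw [this] at hfu
  linarith
end

section
/- Let φ : ℝ → ℝ be continuous, nonincreasing, with φ = θ_j on (-∞, 0], φ = θ_i on [η, ∞), strictly decreasing on (0, η), θ_i < θ_j. Suppose w : ℝ → ℝ is continuous, nonincreasing, satisfies w ≥ φ, w(x) = θ_j for all x ≤ a and w(x) = θ_i for all x ≥ b (some a ≤ b). If w(x) > φ(x) for all x ∈ (0, η], then there exists ε > 0 with w(x) ≥ φ(x − ε) for all x ∈ ℝ. -/
open Set Filter Topology

/-!
Let `c = inf {x | w x < θj} > 0`, so `w ≥ θj ≥ φ(· - ε)` to the left of `c`. On the compact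
interval `[c/2, η] ⊆ (0, η]` the strict inequality `φ < w` survives a small shift of the argument
of `w`, which handles every `x ≥ c` with `x - ε ≤ η` once `ε < c/2`; beyond that,
`φ(x - ε) = θi = φ x ≤ w x`.
-/

theorem IsCompact.eventually_forall_lt_comp_add {α β : Type*} [TopologicalSpace α]
    [AddZeroClass α] [ContinuousAdd α] [TopologicalSpace β] [LinearOrder β]
    [OrderClosedTopology β] {f g : α → β} (hf : Continuous f) (hg : Continuous g) {K : Set α}
    (hK : IsCompact K) (hlt : ∀ y ∈ K, f y < g y) :
    ∀ᶠ t in 𝓝 0, ∀ y ∈ K, f y < g (y + t) := by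
  refine hK.eventually_forall_of_forall_eventually fun y hy => ?_
  have hopen : IsOpen {p : α × α | f p.2 < g (p.2 + p.1)} :=
    isOpen_lt (by fun_prop) (by fun_prop)
  exact hopen.mem_nhds (by simpa using hlt y hy)

theorem Real.bddBelow_of_sInf_pos {s : Set ℝ} (h : 0 < sInf s) : BddBelow s := by
  by_contra hs
  exact h.ne' (Real.sInf_of_not_bddBelow hs)

theorem sliding_lemma_general
    (θi θj η : ℝ)
    (φ w : ℝ → ℝ)
    (hφcont : Continuous φ) (hφmono : Antitone φ)
    (hφleft : ∀ x ≤ (0:ℝ), φ x = θj) (hφright : ∀ x ≥ η, φ x = θi)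
    (hwcont : Continuous w)
    (hwge : ∀ x, φ x ≤ w x)
    (hstrictabove : ∀ x ∈ Set.Ioc 0 η, φ x < w x)
    (hinf : 0 < sInf {x : ℝ | w x < θj}) :
    ∃ ε > (0:ℝ), ∀ x : ℝ, φ (x - ε) ≤ w x := by
  set c := sInf {x : ℝ | w x < θj}
  have hshift := (isCompact_Icc (a := c / 2) (b := η)).eventually_forall_lt_comp_add hφcont
    hwcont fun y hy => hstrictabove y ⟨by linarith [hy.1], hy.2⟩
  obtain ⟨ε, hshiftε, hε0, hεc⟩ :=
    ((hshift.filter_mono nhdsWithin_le_nhds).and (Ioo_mem_nhdsGT (half_pos hinf))).exists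
  refine ⟨ε, hε0, fun x => ?_⟩
  rcases lt_or_ge x c with hxc | hxc
  · have hx : x ∉ {x : ℝ | w x < θj} := notMem_of_lt_csInf hxc (Real.bddBelow_of_sInf_pos hinf)
    calc φ (x - ε) ≤ φ (min (x - ε) 0) := hφmono (min_le_left _ _)
      _ = θj := hφleft _ (min_le_right _ _)
      _ ≤ w x := not_lt.1 hx
  rcases le_or_gt (x - ε) η with hxη | hxη
  · simpa using (hshiftε (x - ε) ⟨by linarith, hxη⟩).le
  · rw [hφright _ hxη.le, ← hφright x (by linarith)]
    exact hwge x

/-- sliding lemma. A continuous nonincreasing function `w` lying above a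
compact strictly-monotone profile `φ`, strictly above it on `(0, η]`, equal to the limiting
states outside a bounded set, and with `inf {x : w x < θj} > 0`, lies above a small
leftward shift `φ(· - ε)` of the profile. -/
theorem sliding_lemma
    (θi θj η : ℝ) (hij : θi < θj) (hη : 0 < η)
    (φ w : ℝ → ℝ)
    (hφcont : Continuous φ) (hφmono : Antitone φ)
    (hφleft : ∀ x ≤ (0:ℝ), φ x = θj) (hφright : ∀ x ≥ η, φ x = θi)
    (hφstrict : StrictAntiOn φ (Set.Ioo 0 η))
    (hwcont : Continuous w) (hwmono : Antitone w)
    (hwge : ∀ x, φ x ≤ w x)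
    (a b : ℝ) (hab : a ≤ b)
    (hwleft : ∀ x ≤ a, w x = θj) (hwright : ∀ x ≥ b, w x = θi)
    (hstrictabove : ∀ x ∈ Set.Ioc 0 η, φ x < w x)
    (hinf : 0 < sInf {x : ℝ | w x < θj}) :
    ∃ ε > (0:ℝ), ∀ x : ℝ, φ (x - ε) ≤ w x :=
  sliding_lemma_general θi θj η φ w hφcont hφmono hφleft hφright hwcont hwge hstrictabove hinf
end

section
/- Let u_n : [0,1] × I → ℝ be classical solutions of ∂ₜu_n = ∂ₓₓu_n + c∂ₓu_n + g(u_n) on the compact interval I = [a, a + ε/2], with 1 − 1/n < u_n < 1 on [0,1] × I, ∂ₓu_n → 0 uniformly on [0,1] × I, and u_n(t, ∂I) ∈ (1−1/n, 1), where g is continuous with g(s) ≥ f* > 0 for all s ∈ (1 − 1/n₀, 1). Then liminf_{n→∞} ∫_I u_n(1, x) dx ≥ (ε/2)(f* + 1), contradicting u_n < 1; hence no such sequence exists. -/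
open Set Filter Topology

/-- If `f` has negative derivative at `a` then `a` is not a minimum of `f` on `[a,b]`. -/
lemma aux_no_min_left {f : ℝ → ℝ} {a b d : ℝ} (hab : a < b) (hd : HasDerivAt f d a)
    (hneg : d < 0) (hmin : IsMinOn f (Set.Icc a b) a) : False := by
  have h1 : Tendsto (slope f a) (𝓝[≠] a) (𝓝 d) := hasDerivAt_iff_tendsto_slope.1 hd
  have h2 : ∀ᶠ z in 𝓝[≠] a, slope f a z < 0 := h1.eventually (eventually_lt_nhds hneg)
  have h2' : ∀ᶠ z in 𝓝[>] a, slope f a z < 0 :=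
    h2.filter_mono (nhdsWithin_mono a fun y hy => ne_of_gt hy)
  have h3 : ∀ᶠ z in 𝓝[>] a, z ∈ Set.Ioo a b :=
    Ioo_mem_nhdsGT_of_mem ⟨le_rfl, hab⟩
  obtain ⟨z, hz1, hz2⟩ := (h2'.and h3).exists
  have hzpos : 0 < z - a := by linarith [hz2.1]
  rw [slope_def_field] at hz1
  have : f z - f a < 0 := by
    by_contra h
    push_neg at h
    exact absurd hz1 (not_lt.2 (div_nonneg h hzpos.le))
  have := isMinOn_iff.1 hmin z ⟨hz2.1.le, hz2.2.le⟩
  linarith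

/-- If `f` has positive derivative at `b` then `b` is not a minimum of `f` on `[a,b]`. -/
lemma aux_no_min_right {f : ℝ → ℝ} {a b d : ℝ} (hab : a < b) (hd : HasDerivAt f d b)
    (hpos : 0 < d) (hmin : IsMinOn f (Set.Icc a b) b) : False := by
  have h1 : Tendsto (slope f b) (𝓝[≠] b) (𝓝 d) := hasDerivAt_iff_tendsto_slope.1 hd
  have h2 : ∀ᶠ z in 𝓝[≠] b, 0 < slope f b z := h1.eventually (eventually_gt_nhds hpos)
  have h2' : ∀ᶠ z in 𝓝[<] b, 0 < slope f b z :=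
    h2.filter_mono (nhdsWithin_mono b fun y hy => ne_of_lt hy)
  have h3 : ∀ᶠ z in 𝓝[<] b, z ∈ Set.Ioo a b :=
    Ioo_mem_nhdsLT_of_mem ⟨hab, le_rfl⟩
  obtain ⟨z, hz1, hz2⟩ := (h2'.and h3).exists
  have hzneg : z - b < 0 := by linarith [hz2.2]
  rw [slope_def_field] at hz1
  have : f z - f b < 0 := by
    by_contra h
    push_neg at h
    have : (f z - f b) / (z - b) ≤ 0 := div_nonpos_of_nonneg_of_nonpos h hzneg.le
    linarith
  have := isMinOn_iff.1 hmin z ⟨hz2.1.le, hz2.2.le⟩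
  linarith

/-- At an interior local minimum, the second derivative is nonnegative. -/
lemma aux_second_deriv_nonneg {f f' : ℝ → ℝ} {x₀ s : ℝ}
    (hd : ∀ x, HasDerivAt f (f' x) x) (hd' : HasDerivAt f' s x₀)
    (hmin : IsLocalMin f x₀) : 0 ≤ s := by
  by_contra hs
  push_neg at hs
  have hf'0 : f' x₀ = 0 := by
    have h := hmin.deriv_eq_zero
    rwa [(hd x₀).deriv] at h
  have h1 : Tendsto (slope f' x₀) (𝓝[≠] x₀) (𝓝 s) := hasDerivAt_iff_tendsto_slope.1 hd'
  have h2 : ∀ᶠ z in 𝓝[>] x₀, slope f' x₀ z < 0 :=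
    (h1.eventually (eventually_lt_nhds hs)).filter_mono
      (nhdsWithin_mono x₀ fun y hy => ne_of_gt hy)
  obtain ⟨e, he, hIoo⟩ := mem_nhdsGT_iff_exists_Ioo_subset.1 h2
  obtain ⟨e', he', hball⟩ := Metric.mem_nhds_iff.1 hmin
  -- pick z
  set z := x₀ + min (e - x₀) e' / 2 with hz
  have hmpos : 0 < min (e - x₀) e' := lt_min (by simpa using he) he'
  have hxz : x₀ < z := by simp only [hz]; linarith
  have hze : z < e := by
    have : min (e - x₀) e' ≤ e - x₀ := min_le_left _ _
    simp only [hz]; linarith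
  have hzb : |z - x₀| < e' := by
    have h₁ : min (e - x₀) e' ≤ e' := min_le_right _ _
    rw [abs_of_pos (by linarith)]
    simp only [hz]; linarith
  have hf'neg : ∀ y ∈ Set.Ioo x₀ z, f' y < 0 := by
    intro y hy
    have hy' : y ∈ Set.Ioo x₀ e := ⟨hy.1, lt_trans hy.2 hze⟩
    have := hIoo hy'
    simp only [Set.mem_setOf_eq, slope_def_field, hf'0, sub_zero] at this
    have hypos : 0 < y - x₀ := by linarith [hy.1]
    by_contra h
    push_neg at h
    exact absurd this (not_lt.2 (div_nonneg h hypos.le))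
  obtain ⟨ξ, hξ, hξeq⟩ := exists_hasDerivAt_eq_slope f f' hxz
    (fun x _ => (hd x).continuousAt.continuousWithinAt) (fun x _ => hd x)
  have hξneg : f' ξ < 0 := hf'neg ξ hξ
  have hfz : f z < f x₀ := by
    rw [hξeq] at hξneg
    have hzpos : 0 < z - x₀ := by linarith
    have hlt : f z - f x₀ < 0 := by
      by_contra h
      push_neg at h
      exact absurd hξneg (not_lt.2 (div_nonneg h hzpos.le))
    linarith
  have : f x₀ ≤ f z := hball (by simpa [Metric.mem_ball, Real.dist_eq] using hzb)
  linarith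

set_option maxHeartbeats 1000000 in
/-- the integral argument. There is no sequence `u_n` of classical solutions
of `∂ₜu = ∂ₓₓu + c ∂ₓu + g(u)` on `[0,1] × I`, `I = [a, a + ε/2]`, squeezed in
`(1 - 1/n, 1)`, with `∂ₓu_n → 0` uniformly, when `g ≥ f* > 0` near `1`: integrating the
equation would force `liminf ∫_I u_n(1) ≥ (ε/2)(f* + 1)`, exceeding the bound `u_n < 1`. -/
theorem no_lagging_sequence
    (ε a c fstar : ℝ) (hε : 0 < ε) (hfstar : 0 < fstar)
    (n₀ : ℕ) (hn₀ : 1 ≤ n₀)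
    (g : ℝ → ℝ) (hg : Continuous g)
    (hgf : ∀ s ∈ Set.Ioo (1 - 1 / (n₀ : ℝ)) 1, fstar ≤ g s)
    (u : ℕ → ℝ → ℝ → ℝ)
    -- classical solutions on [0,1] × I, I = [a, a + ε/2]
    (hpde : ∀ n, n₀ ≤ n → ∀ t ∈ Set.Icc (0:ℝ) 1, ∀ x ∈ Set.Icc a (a + ε / 2),
      HasDerivAt (fun s => u n s x)
        (deriv (deriv (u n t)) x + c * deriv (u n t) x + g (u n t x)) t)
    (hC2 : ∀ n, n₀ ≤ n → ∀ t ∈ Set.Icc (0:ℝ) 1, ContDiff ℝ 2 (u n t))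
    -- squeezed between 1 - 1/n and 1
    (hsqueeze : ∀ n, n₀ ≤ n → ∀ t ∈ Set.Icc (0:ℝ) 1, ∀ x ∈ Set.Icc a (a + ε / 2),
      u n t x ∈ Set.Ioo (1 - 1 / (n : ℝ)) 1)
    -- spatial derivatives tend to 0 uniformly on [0,1] × I
    (hdx : TendstoUniformlyOn
      (fun n (p : ℝ × ℝ) => deriv (u n p.1) p.2) 0 atTop
      (Set.Icc (0:ℝ) 1 ×ˢ Set.Icc a (a + ε / 2))) :
    False := by
  classical
  have hε2 : 0 < ε / 2 := by linarith
  set b := a + ε / 2 with hbdef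
  have hab : a < b := by simp only [hbdef]; linarith
  have hba : b - a = ε / 2 := by simp only [hbdef]; ring
  -- constants
  set δ : ℝ := min (fstar / (8 * (1 + |c|))) (min (fstar * ε / 64) (fstar / (2 * ε)))
    with hδdef
  have hδpos : 0 < δ := by
    refine lt_min (by positivity) (lt_min (by positivity) (by positivity))
  have hδ1 : |c| * δ ≤ fstar / 8 := by
    have h : δ ≤ fstar / (8 * (1 + |c|)) := min_le_left _ _
    have habs : (0:ℝ) ≤ |c| := abs_nonneg c
    calc |c| * δ ≤ |c| * (fstar / (8 * (1 + |c|))) := mul_le_mul_of_nonneg_left h habs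
      _ ≤ (1 + |c|) * (fstar / (8 * (1 + |c|))) :=
          mul_le_mul_of_nonneg_right (by linarith) (by positivity)
      _ = fstar / 8 := by field_simp
  have hδ2 : 8 * δ / ε ≤ fstar / 8 := by
    have h : δ ≤ fstar * ε / 64 := le_trans (min_le_right _ _) (min_le_left _ _)
    rw [div_le_div_iff₀ hε (by norm_num)]
    nlinarith
  have hδ3 : δ * ε / 4 ≤ fstar / 8 := by
    have h : δ ≤ fstar / (2 * ε) := le_trans (min_le_right _ _) (min_le_right _ _)
    have h2 : δ * ε ≤ fstar / 2 := by
      calc δ * ε ≤ fstar / (2 * ε) * ε := mul_le_mul_of_nonneg_right h hε.le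
        _ = fstar / 2 := by field_simp
    linarith
  set η : ℝ := 4 * δ / ε with hηdef
  have hηpos : 0 < η := by positivity
  -- choose the index n
  have hev := Metric.tendstoUniformlyOn_iff.1 hdx δ hδpos
  obtain ⟨Nd, hNd⟩ := eventually_atTop.1 hev
  obtain ⟨M, hM⟩ := exists_nat_gt (8 / fstar)
  set n := max (max n₀ Nd) (M + 1) with hndef
  have hn0 : n₀ ≤ n := le_trans (le_max_left _ _) (le_max_left _ _)
  have hnNd : Nd ≤ n := le_trans (le_max_right _ _) (le_max_left _ _)
  have hnM : M + 1 ≤ n := le_max_right _ _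
  have hnpos : 0 < n := lt_of_lt_of_le (Nat.succ_pos M) hnM
  have hnposR : (0:ℝ) < (n:ℝ) := by exact_mod_cast hnpos
  have h1n : 1 / (n:ℝ) ≤ fstar / 8 := by
    have h8 : 8 / fstar < (n:ℝ) := by
      calc 8 / fstar < (M:ℝ) := hM
        _ ≤ (M:ℝ) + 1 := by linarith
        _ ≤ (n:ℝ) := by exact_mod_cast hnM
    rw [div_lt_iff₀ hfstar] at h8
    rw [div_le_div_iff₀ hnposR (by norm_num)]
    nlinarith
  have hn₀pos : (0:ℝ) < (n₀:ℝ) := by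
    have : (1:ℕ) ≤ n₀ := hn₀
    exact_mod_cast Nat.lt_of_lt_of_le Nat.zero_lt_one this
  -- basic facts for this n
  have husq : ∀ t ∈ Set.Icc (0:ℝ) 1, ∀ x ∈ Set.Icc a b,
      u n t x ∈ Set.Ioo (1 - 1 / (n:ℝ)) 1 := hsqueeze n hn0
  have hC : ∀ t ∈ Set.Icc (0:ℝ) 1, ContDiff ℝ 2 (u n t) := hC2 n hn0
  have hdxb : ∀ t ∈ Set.Icc (0:ℝ) 1, ∀ x ∈ Set.Icc a b, |deriv (u n t) x| < δ := by
    intro t ht x hx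
    have h := hNd n hnNd (t, x) (Set.mk_mem_prod ht hx)
    simpa [Real.dist_eq] using h
  -- precompute eta facts, then make constants opaque
  have hηvala : η * (2 * a - (a + b)) = -(2*δ) := by
    rw [show 2*a - (a+b) = -(b-a) by ring, hba]
    simp only [hηdef]; field_simp; ring
  have hηvalb : η * (2 * b - (a + b)) = 2*δ := by
    rw [show 2*b - (a+b) = b - a by ring, hba]
    simp only [hηdef]; field_simp; ring
  have hηq : η * (-(ε/2)^2/4) = -(δ * ε / 4) := by
    simp only [hηdef]; field_simp; ring
  have h2ηb : η * 2 ≤ fstar / 8 := by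
    have h : η * 2 = 8 * δ / ε := by simp only [hηdef]; ring
    linarith [h ▸ hδ2]
  clear_value b δ η n
  clear hδdef hηdef hndef hbdef hev hM hnM hnNd hnpos
  -- the perturbed function
  set q : ℝ → ℝ := fun x => (x - a) * (x - b) with hqdef
  set v : ℝ → ℝ → ℝ := fun t x => u n t x + η * q x with hvdef
  have hqderiv : ∀ x : ℝ, HasDerivAt q (2 * x - (a + b)) x := by
    intro x
    have h := ((hasDerivAt_id x).sub_const a).mul ((hasDerivAt_id x).sub_const b)
    exact h.congr_deriv (by simp only [id_eq]; ring)
  have hvderiv : ∀ t ∈ Set.Icc (0:ℝ) 1, ∀ x : ℝ,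
      HasDerivAt (v t) (deriv (u n t) x + η * (2 * x - (a + b))) x := by
    intro t ht x
    have h1 : HasDerivAt (u n t) (deriv (u n t) x) x :=
      (((hC t ht).differentiable (by norm_num)) x).hasDerivAt
    exact h1.add ((hqderiv x).const_mul η)
  -- minimizers
  have hminex : ∀ t ∈ Set.Icc (0:ℝ) 1, ∃ x ∈ Set.Icc a b, IsMinOn (v t) (Set.Icc a b) x := by
    intro t ht
    have hvdiff : Differentiable ℝ (v t) := fun x => (hvderiv t ht x).differentiableAt
    exact isCompact_Icc.exists_isMinOn ⟨a, left_mem_Icc.2 hab.le⟩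
      hvdiff.continuous.continuousOn
  choose xm hxmI hxmmin using hminex
  set φ : ℝ → ℝ := fun t => sInf (v t '' Set.Icc a b) with hφdef
  have hφeq : ∀ t (ht : t ∈ Set.Icc (0:ℝ) 1), φ t = v t (xm t ht) := by
    intro t ht
    simp only [hφdef]
    refine IsLeast.csInf_eq ⟨Set.mem_image_of_mem _ (hxmI t ht), ?_⟩
    rintro y ⟨x, hx, rfl⟩
    exact isMinOn_iff.1 (hxmmin t ht) x hx
  have hφle : ∀ t (ht : t ∈ Set.Icc (0:ℝ) 1), ∀ x ∈ Set.Icc a b, φ t ≤ v t x := by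
    intro t ht x hx
    rw [hφeq t ht]
    exact isMinOn_iff.1 (hxmmin t ht) x hx
  -- bounds from the bump
  have hqa : q a = 0 := by simp [hqdef]
  have hηqlb : ∀ x ∈ Set.Icc a b, -(δ * ε / 4) ≤ η * q x := by
    intro x hx
    have hqlb : -(ε/2)^2/4 ≤ q x := by
      simp only [hqdef]
      have hsq2 : (ε/2)^2 = (b-a)^2 := by rw [hba]
      nlinarith [sq_nonneg ((x - a) + (x - b)), hsq2]
    have h2 : η * (-(ε/2)^2/4) ≤ η * q x := mul_le_mul_of_nonneg_left hqlb hηpos.le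
    linarith [hηq]
  -- gap bound on φ
  have ht1 : (1:ℝ) ∈ Set.Icc (0:ℝ) 1 := Set.right_mem_Icc.2 zero_le_one
  have ht0 : (0:ℝ) ∈ Set.Icc (0:ℝ) 1 := Set.left_mem_Icc.2 zero_le_one
  have hφ1 : φ 1 < 1 := by
    have h := hφle 1 ht1 a (Set.left_mem_Icc.2 hab.le)
    have h2 := (husq 1 ht1 a (Set.left_mem_Icc.2 hab.le)).2
    have h3 : v 1 a = u n 1 a := by simp [hvdef, hqa]
    linarith [h3 ▸ h]
  have hφ0 : 1 - 1/(n:ℝ) - δ * ε / 4 < φ 0 := by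
    rw [hφeq 0 ht0]
    have h1 := (husq 0 ht0 (xm 0 ht0) (hxmI 0 ht0)).1
    have h2 := hηqlb (xm 0 ht0) (hxmI 0 ht0)
    simp only [hvdef]
    linarith
  have hgap : φ 1 - φ 0 < fstar / 4 := by linarith
  -- Lipschitz in x
  have hLip : ∀ t ∈ Set.Icc (0:ℝ) 1, ∀ x ∈ Set.Icc a b, ∀ y ∈ Set.Icc a b,
      |u n t x - u n t y| ≤ δ * |x - y| := by
    intro t ht x hx y hy
    have h := Convex.norm_image_sub_le_of_norm_deriv_le
      (f := u n t) (s := Set.Icc a b)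
      (fun z _ => ((hC t ht).differentiable (by norm_num)).differentiableAt)
      (fun z hz => by rw [Real.norm_eq_abs]; exact (hdxb t ht z hz).le)
      (convex_Icc a b) hy hx
    simpa [Real.norm_eq_abs] using h
  -- joint continuity
  have hUcont : ContinuousOn (fun p : ℝ × ℝ => u n p.1 p.2)
      (Set.Icc (0:ℝ) 1 ×ˢ Set.Icc a b) := by
    rintro ⟨s, x₀⟩ ⟨hs, hx₀⟩
    rw [Metric.continuousWithinAt_iff]
    intro ε' hε'
    have hw : ContinuousAt (fun τ => u n τ x₀) s := (hpde n hn0 s hs x₀ hx₀).continuousAt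
    rw [Metric.continuousAt_iff] at hw
    obtain ⟨d1, hd1, hwc⟩ := hw (ε'/2) (by linarith)
    have hpos2 : (0:ℝ) < ε'/(2*(δ+1)) := by
      have h0 : (0:ℝ) < δ + 1 := by linarith
      positivity
    refine ⟨min d1 (ε'/(2*(δ+1))), lt_min hd1 hpos2, ?_⟩
    rintro ⟨t, y⟩ ⟨ht, hy⟩ hdist
    rw [Prod.dist_eq] at hdist
    have hts : dist t s < d1 :=
      lt_of_le_of_lt (le_max_left _ _) (lt_of_lt_of_le hdist (min_le_left _ _))
    have hyx : dist y x₀ < ε'/(2*(δ+1)) :=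
      lt_of_le_of_lt (le_max_right _ _) (lt_of_lt_of_le hdist (min_le_right _ _))
    have h1 : |u n t y - u n t x₀| ≤ δ * |y - x₀| := hLip t ht y hy x₀ hx₀
    have h2 : |u n t x₀ - u n s x₀| < ε'/2 := by
      have h := hwc hts; rwa [Real.dist_eq] at h
    have h3 : δ * |y - x₀| < ε'/2 := by
      rw [Real.dist_eq] at hyx
      have h4 : δ * |y - x₀| ≤ δ * (ε'/(2*(δ+1))) :=
        mul_le_mul_of_nonneg_left hyx.le hδpos.le
      have h5 : δ * (ε'/(2*(δ+1))) < ε'/2 := by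
        have hd1 : (0:ℝ) < 2*(δ+1) := by linarith
        rw [mul_div_assoc', div_lt_div_iff₀ hd1 (by norm_num : (0:ℝ) < 2)]
        nlinarith [hε', hδpos]
      linarith
    rw [Real.dist_eq]
    calc |u n t y - u n s x₀|
        ≤ |u n t y - u n t x₀| + |u n t x₀ - u n s x₀| := abs_sub_le _ _ _
      _ < ε'/2 + ε'/2 := add_lt_add_of_le_of_lt (le_trans h1 h3.le) h2
      _ = ε' := by ring
  have hUuc := (isCompact_Icc.prod isCompact_Icc).uniformContinuousOn_of_continuous hUcont
  rw [Metric.uniformContinuousOn_iff] at hUuc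
  -- continuity of φ
  have hφcont : ContinuousOn φ (Set.Icc (0:ℝ) 1) := by
    intro s hs
    rw [Metric.continuousWithinAt_iff]
    intro ε' hε'
    obtain ⟨d, hd, hduc⟩ := hUuc ε' hε'
    refine ⟨d, hd, ?_⟩
    intro t ht hdist
    rw [Real.dist_eq] at hdist ⊢
    have key : ∀ (t1 : ℝ) (ht1 : t1 ∈ Set.Icc (0:ℝ) 1) (t2 : ℝ) (ht2 : t2 ∈ Set.Icc (0:ℝ) 1),
        |t1 - t2| < d → φ t1 - φ t2 < ε' := by
      intro t1 ht1 t2 ht2 h12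
      have hx2 := hxmI t2 ht2
      have h1 : φ t1 ≤ v t1 (xm t2 ht2) := hφle t1 ht1 _ hx2
      have h2 : φ t2 = v t2 (xm t2 ht2) := hφeq t2 ht2
      have h3 : dist (u n t1 (xm t2 ht2)) (u n t2 (xm t2 ht2)) < ε' := by
        apply hduc (t1, xm t2 ht2) (Set.mk_mem_prod ht1 hx2)
          (t2, xm t2 ht2) (Set.mk_mem_prod ht2 hx2)
        rw [Prod.dist_eq]
        simp only [dist_self]
        rw [max_eq_left dist_nonneg, Real.dist_eq]
        exact h12
      rw [Real.dist_eq] at h3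
      have h3' : u n t1 (xm t2 ht2) - u n t2 (xm t2 ht2) < ε' :=
        lt_of_le_of_lt (le_abs_self _) h3
      simp only [hvdef] at h1 h2
      linarith
    rw [abs_sub_lt_iff]
    exact ⟨key t ht s hs hdist, key s hs t ht (by rwa [abs_sub_comm])⟩
  -- the key derivative bound at minimizers
  have hkey : ∀ t (ht : t ∈ Set.Icc (0:ℝ) 1),
      3 * fstar / 4 ≤ deriv (deriv (u n t)) (xm t ht) + c * deriv (u n t) (xm t ht)
        + g (u n t (xm t ht)) := by
    intro t ht
    have hx₁ : xm t ht ∈ Set.Icc a b := hxmI t ht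
    have hmin := hxmmin t ht
    have hna : xm t ht ≠ a := by
      intro h
      refine aux_no_min_left hab (hvderiv t ht a) ?_ (h ▸ hmin)
      have hda := abs_lt.1 (hdxb t ht a (Set.left_mem_Icc.2 hab.le))
      rw [hηvala]
      linarith [hda.1, hda.2]
    have hnb : xm t ht ≠ b := by
      intro h
      refine aux_no_min_right hab (hvderiv t ht b) ?_ (h ▸ hmin)
      have hdb := abs_lt.1 (hdxb t ht b (Set.right_mem_Icc.2 hab.le))
      rw [hηvalb]
      linarith [hdb.1, hdb.2]
    have hxIoo : xm t ht ∈ Set.Ioo a b :=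
      ⟨lt_of_le_of_ne hx₁.1 (Ne.symm hna), lt_of_le_of_ne hx₁.2 hnb⟩
    have hlocmin : IsLocalMin (v t) (xm t ht) :=
      hmin.isLocalMin (Icc_mem_nhds hxIoo.1 hxIoo.2)
    have hC2' : ContDiff ℝ 1 (deriv (u n t)) := by
      have h := hC t ht
      rw [show ((2:WithTop ℕ∞)) = 1 + 1 from rfl, contDiff_succ_iff_deriv] at h
      exact h.2.2
    have hdd : HasDerivAt (deriv (u n t)) (deriv (deriv (u n t)) (xm t ht)) (xm t ht) :=
      ((hC2'.differentiable (by norm_num)) (xm t ht)).hasDerivAt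
    have hlin : HasDerivAt (fun x : ℝ => 2 * x - (a + b)) 2 (xm t ht) := by
      simpa using ((hasDerivAt_id (xm t ht)).const_mul (2:ℝ)).sub_const (a + b)
    have hf' : HasDerivAt (fun x => deriv (u n t) x + η * (2 * x - (a + b)))
        (deriv (deriv (u n t)) (xm t ht) + η * 2) (xm t ht) :=
      hdd.add (hlin.const_mul η)
    have hsecond : 0 ≤ deriv (deriv (u n t)) (xm t ht) + η * 2 :=
      aux_second_deriv_nonneg (hvderiv t ht) hf' hlocmin
    have hsq := husq t ht (xm t ht) hx₁
    have hgb : fstar ≤ g (u n t (xm t ht)) := by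
      apply hgf
      constructor
      · have h1 : (1:ℝ)/(n:ℝ) ≤ 1/(n₀:ℝ) :=
          one_div_le_one_div_of_le hn₀pos (by exact_mod_cast hn0)
        linarith [hsq.1]
      · exact hsq.2
    have hdx₁ := hdxb t ht (xm t ht) hx₁
    have hcd : -(fstar/8) ≤ c * deriv (u n t) (xm t ht) := by
      have h1 : |c| * |deriv (u n t) (xm t ht)| ≤ |c| * δ :=
        mul_le_mul_of_nonneg_left hdx₁.le (abs_nonneg c)
      have h2 := neg_abs_le (c * deriv (u n t) (xm t ht))
      rw [abs_mul] at h2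
      linarith
    linarith
  -- the fencing argument
  set f : ℝ → ℝ := fun s => φ (1 - s) with hfdef
  have hmem : Set.MapsTo (fun s : ℝ => 1 - s) (Set.Icc (0:ℝ) 1) (Set.Icc (0:ℝ) 1) := by
    intro s hs
    simp only [Set.mem_Icc] at hs ⊢
    constructor <;> linarith [hs.1, hs.2]
  have hfcont : ContinuousOn f (Set.Icc 0 1) :=
    hφcont.comp ((continuous_const.sub continuous_id).continuousOn) hmem
  have hslope : ∀ s ∈ Set.Ico (0:ℝ) 1, ∀ r, (fun _ : ℝ => -(3 * fstar / 4)) s < r →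
      ∃ᶠ z in 𝓝[>] s, slope f s z < r := by
    intro s hs r hr
    simp only at hr
    have hts : (1 - s) ∈ Set.Icc (0:ℝ) 1 := ⟨by linarith [hs.2.le], by linarith [hs.1]⟩
    have hx₁ : xm (1-s) hts ∈ Set.Icc a b := hxmI (1-s) hts
    have hw : HasDerivAt (fun τ => u n τ (xm (1-s) hts))
        (deriv (deriv (u n (1-s))) (xm (1-s) hts) + c * deriv (u n (1-s)) (xm (1-s) hts)
          + g (u n (1-s) (xm (1-s) hts))) (1-s) :=
      hpde n hn0 (1-s) hts (xm (1-s) hts) hx₁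
    have hD := hkey (1-s) hts
    have hslopew := hasDerivAt_iff_tendsto_slope.1 hw
    have hgt : ∀ᶠ z in 𝓝[≠] (1-s), -r < slope (fun τ => u n τ (xm (1-s) hts)) (1-s) z :=
      hslopew.eventually (eventually_gt_nhds (by linarith))
    have hmap : Tendsto (fun z : ℝ => 1 - z) (𝓝[>] s) (𝓝[≠] (1-s)) := by
      refine Tendsto.mono_right ?_ (nhdsWithin_mono _ (s := Set.Iio (1 - s)) fun y hy => ne_of_lt hy)
      rw [tendsto_nhdsWithin_iff]
      constructor
      · have hc : Continuous (fun z : ℝ => 1 - z) := by fun_prop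
        exact (hc.tendsto s).mono_left nhdsWithin_le_nhds
      · filter_upwards [self_mem_nhdsWithin] with z hz
        exact sub_lt_sub_left (show s < z from hz) (1:ℝ)
    have hgt' : ∀ᶠ z in 𝓝[>] s,
        -r < slope (fun τ => u n τ (xm (1-s) hts)) (1-s) (1 - z) := hmap.eventually hgt
    have hz1 : ∀ᶠ z in 𝓝[>] s, z ∈ Set.Ioo s 1 := Ioo_mem_nhdsGT_of_mem ⟨le_rfl, hs.2⟩
    refine ((hgt'.and hz1).mono ?_).frequently
    rintro z ⟨hzslope, hzI⟩
    have hτ : (1 - z) ∈ Set.Icc (0:ℝ) 1 := ⟨by linarith [hzI.2], by linarith [hzI.1, hs.1]⟩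
    have hle := hφle (1 - z) hτ (xm (1-s) hts) hx₁
    have heqt : φ (1-s) = v (1-s) (xm (1-s) hts) := hφeq (1-s) hts
    have hzs : 0 < z - s := by linarith [hzI.1]
    rw [slope_def_field] at hzslope ⊢
    have hdenom : (1 - z) - (1 - s) = -(z - s) := by ring
    rw [hdenom, lt_div_iff_of_neg (by linarith : -(z-s) < 0)] at hzslope
    have hnum : u n (1-z) (xm (1-s) hts) - u n (1-s) (xm (1-s) hts) < r * (z - s) := by
      nlinarith [hzslope]
    have hφdiff : φ (1 - z) - φ (1-s) ≤
        u n (1-z) (xm (1-s) hts) - u n (1-s) (xm (1-s) hts) := by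
      simp only [hvdef] at hle heqt
      linarith
    have hfz : f z = φ (1 - z) := rfl
    have hfs : f s = φ (1 - s) := rfl
    rw [hfz, hfs, div_lt_iff₀ hzs]
    linarith
  have hB : ∀ x : ℝ, HasDerivAt (fun s : ℝ => f 0 + (-(fstar/2)) * s)
      ((fun _ : ℝ => -(fstar/2)) x) x := by
    intro x
    simpa using ((hasDerivAt_id x).const_mul (-(fstar/2))).const_add (f 0)
  have hfence := image_le_of_liminf_slope_right_lt_deriv_boundary (a := 0) (b := 1)
    hfcont hslope (by simp) hB (fun x _ _ => by norm_num; linarith)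
  have hf1 := hfence (Set.right_mem_Icc.2 zero_le_one)
  have hfv1 : f 1 = φ 0 := by simp [hfdef]
  have hfv0 : f 0 = φ 1 := by simp [hfdef]
  rw [hfv1, hfv0] at hf1
  linarith
end

section
/- Let 0 = p₀ < p₁ < ⋯ < p_J = 1 and let φ_j (j = 1, …, J) be nonincreasing compact waves with φ_j = p_j on (-∞,0], φ_j = p_{j-1} on [η_j, ∞), strictly decreasing on (0, η_j), all with common speed c. Let Φ(t,x; ξ) = Σ_j (φ_j(x − ξ_j − ct) − p_{j-1}) with ξ_j ≥ ξ_{j+1} + η_{j+1} for all j (a terrace solution). Suppose w : ℝ → ℝ is nonincreasing, w ≥ Φ(0, ·; −X⃗) pointwise for shifts X⃗ = (X₁,…,X_J), and w(−X₁) = p₁, where Φ(0, ·; −X⃗) is continuous. Then φ₂(X₂ − X₁) = p₁ and −X₂ − η₂ ≤ −X₁; in particular Φ₂(t,x; (−X₁, −X₂)) := φ₁(x + X₁ − ct) + φ₂(x + X₂ − ct) − p₁ is again a C¹ terrace solution. -/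
open Set Finset

/-- If `φ` is constant on an open set `U` containing `y`, then `deriv φ` has derivative `0`
at `y` and `deriv φ y = 0`. -/
lemma const_on_deriv {φ : ℝ → ℝ} {a y : ℝ} {U : Set ℝ} (hUo : IsOpen U) (hy : y ∈ U)
    (h : ∀ z ∈ U, φ z = a) : HasDerivAt (deriv φ) 0 y ∧ deriv φ y = 0 := by
  have hev : ∀ z ∈ U, deriv φ z = 0 := by
    intro z hz
    have hz' : φ =ᶠ[nhds z] fun _ => a := by
      filter_upwards [hUo.mem_nhds hz] with u hu
      exact h u hu
    simpa using hz'.deriv_eq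
  have hd : deriv φ =ᶠ[nhds y] fun _ => (0:ℝ) := by
    filter_upwards [hUo.mem_nhds hy] with z hz
    exact hev z hz
  exact ⟨(hasDerivAt_const y 0).congr_of_eventuallyEq hd, hev y hy⟩

/-- On a plateau of `φ` whose value avoids `S`, the ODE forces `f` to vanish. -/
lemma f_zero_of_plateau {f : ℝ → ℝ} {S : Set ℝ} {c a : ℝ} {φ : ℝ → ℝ} {U : Set ℝ}
    (hUo : IsOpen U) (hne : U.Nonempty) (hconst : ∀ z ∈ U, φ z = a)
    (hode : ∀ z : ℝ, φ z ∉ S → HasDerivAt (deriv φ) (-(c * deriv φ z) - f (φ z)) z)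
    (ha : a ∉ S) : f a = 0 := by
  obtain ⟨y, hy⟩ := hne
  obtain ⟨h0, hd0⟩ := const_on_deriv hUo hy hconst
  have hode' := hode y (by rw [hconst y hy]; exact ha)
  rw [hconst y hy, hd0] at hode'
  have := h0.unique hode'
  simp at this
  linarith


/-- contact at the bottom wave forces the gluing inequality. If a
nonincreasing `w` lies above the shifted terrace function `Φ(0, ·; -X⃗)` and touches the
platform value `p₁` at `-X₁`, then `φ₂(X₂ - X₁) = p₁` and `-X₂ - η₂ ≤ -X₁`; in particular
`Φ₂(t,x;(-X₁,-X₂)) = φ₁(x + X₁ - ct) + φ₂(x + X₂ - ct) - p₁` is again a C¹ terrace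
solution. -/
theorem contact_forces_gluing
    (f : ℝ → ℝ) (S : Set ℝ) (hS : S.Finite)
    (J : ℕ) (hJ : 2 ≤ J) (c : ℝ)
    (p : ℕ → ℝ) (φ : ℕ → ℝ → ℝ) (η ξ X : ℕ → ℝ)
    (hp0 : p 0 = 0) (hpJ : p J = 1)
    (hpmono : ∀ j, j < J → p j < p (j + 1))
    (hηpos : ∀ j, 1 ≤ j → j ≤ J → 0 < η j)
    (hC1 : ∀ j, 1 ≤ j → j ≤ J → ContDiff ℝ 1 (φ j))
    (hmono : ∀ j, 1 ≤ j → j ≤ J → Antitone (φ j))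
    (hleft : ∀ j, 1 ≤ j → j ≤ J → ∀ z ≤ (0:ℝ), φ j z = p j)
    (hright : ∀ j, 1 ≤ j → j ≤ J → ∀ z ≥ η j, φ j z = p (j - 1))
    (hstrict : ∀ j, 1 ≤ j → j ≤ J → StrictAntiOn (φ j) (Set.Icc 0 (η j)))
    (hode : ∀ j, 1 ≤ j → j ≤ J → ∀ z : ℝ, φ j z ∉ S →
      HasDerivAt (deriv (φ j)) (-(c * deriv (φ j) z) - f (φ j z)) z)
    -- ξ gives a terrace solution
    (hξ : ∀ j, 1 ≤ j → j ≤ J - 1 → ξ j ≥ ξ (j + 1) + η (j + 1))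
    (w : ℝ → ℝ) (hwmono : Antitone w)
    -- w lies above the shifted terrace function Φ(0, ·; -X⃗)
    (hwge : ∀ x : ℝ, (∑ j ∈ Finset.Icc 1 J, (φ j (x + X j) - p (j - 1))) ≤ w x)
    (hΦcont : Continuous (fun x => ∑ j ∈ Finset.Icc 1 J, (φ j (x + X j) - p (j - 1))))
    (hcontact : w (-(X 1)) = p 1) :
    φ 2 (X 2 - X 1) = p 1 ∧ -(X 2) - η 2 ≤ -(X 1) ∧
      (∀ t : ℝ, ContDiff ℝ 1
        (fun x => φ 1 (x + X 1 - c * t) + φ 2 (x + X 2 - c * t) - p 1)) ∧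
      (∀ t x : ℝ,
        (φ 1 (x + X 1 - c * t) + φ 2 (x + X 2 - c * t) - p 1) ∉ S →
        HasDerivAt (fun s => φ 1 (x + X 1 - c * s) + φ 2 (x + X 2 - c * s) - p 1)
          (deriv (deriv (fun y => φ 1 (y + X 1 - c * t) + φ 2 (y + X 2 - c * t) - p 1)) x
            + f (φ 1 (x + X 1 - c * t) + φ 2 (x + X 2 - c * t) - p 1)) t) := by

  -- basic indices
  have h1J : (1:ℕ) ≤ J := by omega
  have h2J : (2:ℕ) ≤ J := hJ
  have hφ10 : φ 1 0 = p 1 := hleft 1 le_rfl h1J 0 le_rfl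
  -- lower bound: p (j-1) ≤ φ j z for all z
  have hlb : ∀ j, 1 ≤ j → j ≤ J → ∀ z : ℝ, p (j - 1) ≤ φ j z := by
    intro j hj1 hjJ z
    have h1 : φ j (max z (η j)) ≤ φ j z := hmono j hj1 hjJ (le_max_left _ _)
    rwa [hright j hj1 hjJ _ (le_max_right _ _)] at h1
  -- Part 1: contact forces φ₂ (X₂ - X₁) = p₁
  have hcontact2 : φ 2 (X 2 - X 1) = p 1 := by
    have key := hwge (-(X 1))
    rw [hcontact] at key
    have hsub : ({1, 2} : Finset ℕ) ⊆ Finset.Icc 1 J := by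
      intro j hj
      simp only [Finset.mem_insert, Finset.mem_singleton] at hj
      simp only [Finset.mem_Icc]
      omega
    have hpair : (φ 1 (-(X 1) + X 1) - p 0) + (φ 2 (-(X 1) + X 2) - p 1)
        ≤ ∑ j ∈ Finset.Icc 1 J, (φ j (-(X 1) + X j) - p (j - 1)) := by
      have := Finset.sum_le_sum_of_subset_of_nonneg hsub
        (fun j hj _ => by
          have hj' : 1 ≤ j ∧ j ≤ J := by simpa using hj
          exact sub_nonneg.mpr (hlb j hj'.1 hj'.2 (-(X 1) + X j)))
      simpa [Finset.sum_pair (by norm_num : (1:ℕ) ≠ 2)] using this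
    have he1 : -(X 1) + X 1 = (0:ℝ) := by ring
    have he2 : -(X 1) + X 2 = X 2 - X 1 := by ring
    rw [he1, he2, hφ10, hp0] at hpair
    have hge : p 1 ≤ φ 2 (X 2 - X 1) := hlb 2 (by norm_num) h2J (X 2 - X 1)
    linarith
  -- Part 2: the gluing inequality
  have hηpos2 : 0 < η 2 := hηpos 2 (by norm_num) h2J
  have hglue : η 2 ≤ X 2 - X 1 := by
    by_contra hcon
    push_neg at hcon
    rcases le_or_gt (X 2 - X 1) 0 with hle | hpos
    · have h1 : φ 2 0 ≤ φ 2 (X 2 - X 1) := hmono 2 (by norm_num) h2J hle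
      rw [hleft 2 (by norm_num) h2J 0 le_rfl, hcontact2] at h1
      have := hpmono 1 (by omega)
      norm_num at this
      linarith
    · have h1 : φ 2 (η 2) < φ 2 (X 2 - X 1) :=
        hstrict 2 (by norm_num) h2J ⟨hpos.le, hcon.le⟩ ⟨hηpos2.le, le_rfl⟩ hcon
      rw [hright 2 (by norm_num) h2J (η 2) le_rfl, hcontact2] at h1
      norm_num at h1
  refine ⟨hcontact2, by linarith, ?_, ?_⟩
  -- Part 3: C¹ regularity
  · intro t
    have ha1 : ContDiff ℝ 1 (fun x : ℝ => x + X 1 - c * t) :=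
      (contDiff_id.add contDiff_const).sub contDiff_const
    have ha2 : ContDiff ℝ 1 (fun x : ℝ => x + X 2 - c * t) :=
      (contDiff_id.add contDiff_const).sub contDiff_const
    exact (((hC1 1 le_rfl h1J).comp ha1).add ((hC1 2 (by norm_num) h2J).comp ha2)).sub
      contDiff_const
  -- Part 4: the ODE for the glued two-wave terrace
  · intro t x hnotS
    have hd1 : Differentiable ℝ (φ 1) := (hC1 1 le_rfl h1J).differentiable one_ne_zero
    have hd2 : Differentiable ℝ (φ 2) := (hC1 2 (by norm_num) h2J).differentiable one_ne_zero
    set z₁ : ℝ := x + X 1 - c * t with hz₁def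
    set z₂ : ℝ := x + X 2 - c * t with hz₂def
    have hz₁₂ : z₁ + η 2 ≤ z₂ := by rw [hz₁def, hz₂def]; linarith
    -- inner derivatives
    have hsh : ∀ (X' y : ℝ), HasDerivAt (fun u : ℝ => u + X' - c * t) 1 y := by
      intro X' y
      simpa using ((hasDerivAt_id y).add_const X').sub_const (c * t)
    have hti : ∀ X' : ℝ, HasDerivAt (fun s : ℝ => x + X' - c * s) (-c) t := by
      intro X'
      simpa using ((hasDerivAt_id t).const_mul c).const_sub (x + X')
    -- time derivative of the glued wave
    have hT1 : HasDerivAt (fun s : ℝ => φ 1 (x + X 1 - c * s)) (deriv (φ 1) z₁ * (-c)) t :=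
      ((hd1 z₁).hasDerivAt).comp t (hti (X 1))
    have hT2 : HasDerivAt (fun s : ℝ => φ 2 (x + X 2 - c * s)) (deriv (φ 2) z₂ * (-c)) t :=
      ((hd2 z₂).hasDerivAt).comp t (hti (X 2))
    have hT : HasDerivAt (fun s : ℝ => φ 1 (x + X 1 - c * s) + φ 2 (x + X 2 - c * s) - p 1)
        (deriv (φ 1) z₁ * (-c) + deriv (φ 2) z₂ * (-c)) t := (hT1.add hT2).sub_const (p 1)
    -- first spatial derivative
    have hgderiv : deriv (fun y => φ 1 (y + X 1 - c * t) + φ 2 (y + X 2 - c * t) - p 1)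
        = fun y => deriv (φ 1) (y + X 1 - c * t) + deriv (φ 2) (y + X 2 - c * t) := by
      funext y
      have h1 : HasDerivAt (fun u : ℝ => φ 1 (u + X 1 - c * t))
          (deriv (φ 1) (y + X 1 - c * t) * 1) y :=
        ((hd1 (y + X 1 - c * t)).hasDerivAt).comp y (hsh (X 1) y)
      have h2 : HasDerivAt (fun u : ℝ => φ 2 (u + X 2 - c * t))
          (deriv (φ 2) (y + X 2 - c * t) * 1) y :=
        ((hd2 (y + X 2 - c * t)).hasDerivAt).comp y (hsh (X 2) y)
      have := ((h1.add h2).sub_const (p 1)).deriv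
      simpa using this
    -- second derivatives via case analysis on the position of z₁, z₂
    obtain ⟨D₁, D₂, hD₁, hD₂, hkey⟩ : ∃ D₁ D₂, HasDerivAt (deriv (φ 1)) D₁ z₁ ∧
        HasDerivAt (deriv (φ 2)) D₂ z₂ ∧
        D₁ + D₂ + f (φ 1 z₁ + φ 2 z₂ - p 1)
          = deriv (φ 1) z₁ * (-c) + deriv (φ 2) z₂ * (-c) := by
      rcases lt_or_ge z₁ 0 with hz₁lt | hz₁ge
      · -- wave 1 is on its left plateau, only wave 2 is active
        obtain ⟨hD₁0, hd₁0⟩ := const_on_deriv isOpen_Iio hz₁lt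
          (fun z hz => hleft 1 le_rfl h1J z (le_of_lt hz))
        have hv : φ 1 z₁ + φ 2 z₂ - p 1 = φ 2 z₂ := by
          rw [hleft 1 le_rfl h1J z₁ hz₁lt.le]; ring
        have hD₂ := hode 2 (by norm_num) h2J z₂ (by rw [← hv]; exact hnotS)
        exact ⟨0, _, hD₁0, hD₂, by rw [hv, hd₁0]; ring⟩
      · rcases lt_or_ge (η 2) z₂ with hz₂gt | hz₂le
        · -- wave 2 is on its right plateau, only wave 1 is active
          obtain ⟨hD₂0, hd₂0⟩ := const_on_deriv isOpen_Ioi hz₂gt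
            (fun z hz => hright 2 (by norm_num) h2J z (le_of_lt hz))
          have hp21 : p (2 - 1) = p 1 := rfl
          have hv : φ 1 z₁ + φ 2 z₂ - p 1 = φ 1 z₁ := by
            rw [hright 2 (by norm_num) h2J z₂ hz₂gt.le, hp21]; ring
          have hD₁ := hode 1 le_rfl h1J z₁ (by rw [← hv]; exact hnotS)
          exact ⟨_, 0, hD₁, hD₂0, by rw [hv, hd₂0]; ring⟩
        · -- boundary case: z₁ = 0 and z₂ = η 2, the value is the plateau p 1
          have hz₁0 : z₁ = 0 := le_antisymm (by linarith) hz₁ge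
          have hz₂η : z₂ = η 2 := le_antisymm hz₂le (by linarith)
          have hφ1 : φ 1 z₁ = p 1 := hleft 1 le_rfl h1J z₁ hz₁0.le
          have hφ2 : φ 2 z₂ = p 1 := by
            have := hright 2 (by norm_num) h2J z₂ hz₂η.ge
            simpa using this
          have hv : φ 1 z₁ + φ 2 z₂ - p 1 = p 1 := by rw [hφ1, hφ2]; ring
          have hp1S : p 1 ∉ S := by rw [← hv]; exact hnotS
          have hf0 : f (p 1) = 0 :=
            f_zero_of_plateau isOpen_Iio ⟨-1, by norm_num⟩
              (fun z hz => hleft 1 le_rfl h1J z (le_of_lt hz))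
              (fun z hz => hode 1 le_rfl h1J z hz) hp1S
          have hD₁ := hode 1 le_rfl h1J z₁ (by rw [hφ1]; exact hp1S)
          have hD₂ := hode 2 (by norm_num) h2J z₂ (by rw [hφ2]; exact hp1S)
          exact ⟨_, _, hD₁, hD₂, by rw [hv, hφ1, hφ2, hf0]; ring⟩
    -- compute the second spatial derivative
    have hDD : HasDerivAt
        (fun y => deriv (φ 1) (y + X 1 - c * t) + deriv (φ 2) (y + X 2 - c * t))
        (D₁ * 1 + D₂ * 1) x :=
      by have := (hD₁.comp x (hsh (X 1) x)).add (hD₂.comp x (hsh (X 2) x)); exact this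
    have hdd : deriv (deriv (fun y => φ 1 (y + X 1 - c * t) + φ 2 (y + X 2 - c * t) - p 1)) x
        = D₁ + D₂ := by
      rw [hgderiv]
      simpa using hDD.deriv
    have hfinal : deriv (deriv (fun y => φ 1 (y + X 1 - c * t) + φ 2 (y + X 2 - c * t) - p 1)) x
        + f (φ 1 z₁ + φ 2 z₂ - p 1)
        = deriv (φ 1) z₁ * (-c) + deriv (φ 2) z₂ * (-c) := by
      rw [hdd]; linarith
    rw [hfinal]
    exact hT
end
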